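/- arXiv:1402.0890 — 3 statements merged into one kernel-verified Lean document; each statement's English description precedes it below -/
import Mathlib

section
/- Let V be a finite-dimensional real inner product space, S(x) = R²‖x‖² with R > 0, and O₁,…,O_k linear functionals on V. The normalized Gaussian expectation (1/Z)∫_V O₁(x)⋯O_k(x) e^{−S(x)} dx vanishes if k is odd, and if k is even it equals the sum over all perfect matchings (pairings) of {1,…,k} of the product over matched pairs {i,j} of (1/(2R²))⟨O_i, O_j⟩. -/
open MeasureTheory Real
open scoped RealInnerProductSpace Classical

open Finset

/-!
Gaussian integration by parts, `2b ∫ ⟪v, x⟫ f(x) e^{-b‖x‖²} dx = ∫ ∂ᵥf(x) e^{-b‖x‖²} dx`, applied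
with `v = O a` and `f = ∏_{i ∈ s \ {a}} ⟪O i, ·⟫`, gives the recursion
`∫ ∏_{i ∈ s} ⟪O i, x⟫ e^{-b‖x‖²} =
  ∑_{j ∈ s \ {a}} (1/2b) ⟪O a, O j⟫ ∫ ∏_{i ∈ s \ {a, j}} ⟪O i, x⟫ e^{-b‖x‖²}`.
Sorting the pairings of `s` by the partner of `a` shows that the sum over pairings satisfies the
same recursion, and both sides agree (after dividing by `Z`) on `s = ∅`. For odd `k` the
integrand is odd under `x ↦ -x`.
-/

section Integrability

variable {V : Type*} [NormedAddCommGroup V] [NormedSpace ℝ V] [FiniteDimensional ℝ V]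
  [MeasurableSpace V] [BorelSpace V] {μ : Measure V} [μ.IsAddHaarMeasure] {b : ℝ}

lemma integrable_norm_pow_mul_exp_neg_mul_sq_norm (hb : 0 < b) (m : ℕ) :
    Integrable (fun x : V => ‖x‖ ^ m * exp (-(b * ‖x‖ ^ 2))) μ := by
  rcases subsingleton_or_nontrivial V with hV | hV
  · exact ((continuous_norm.pow m).mul (continuous_exp.comp (by fun_prop)))
      |>.integrable_of_hasCompactSupport (HasCompactSupport.of_compactSpace _)
  have hs : (-1 : ℝ) < (Module.finrank ℝ V - 1 + m : ℕ) := by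
    linarith [Nat.cast_nonneg (α := ℝ) (Module.finrank ℝ V - 1 + m)]
  refine (integrable_fun_norm_addHaar μ (f := fun y => y ^ m * exp (-(b * y ^ 2)))).2 ?_
  refine (integrableOn_rpow_mul_exp_neg_mul_sq hb hs).congr_fun (fun y _ => ?_) measurableSet_Ioi
  simp only [rpow_natCast, smul_eq_mul, pow_add, neg_mul]
  ring

lemma integrable_mul_exp_neg_mul_sq_norm_of_abs_le {G : V → ℝ} (hG : AEStronglyMeasurable G μ)
    (hb : 0 < b) {C : ℝ} {m : ℕ} (hGC : ∀ x, |G x| ≤ C * ‖x‖ ^ m) :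
    Integrable (fun x => G x * exp (-(b * ‖x‖ ^ 2))) μ := by
  refine ((integrable_norm_pow_mul_exp_neg_mul_sq_norm hb m).const_mul C).mono'
    (hG.mul (by fun_prop)) (Filter.Eventually.of_forall fun x => ?_)
  rw [norm_mul, norm_of_nonneg (exp_pos _).le, ← mul_assoc]
  exact mul_le_mul_of_nonneg_right (hGC x) (exp_pos _).le

end Integrability

section InnerProductSpace

variable {V : Type*} [NormedAddCommGroup V] [InnerProductSpace ℝ V] {ι : Type*}

lemma abs_prod_inner_le (u : ι → V) (s : Finset ι) (x : V) :
    |∏ i ∈ s, ⟪u i, x⟫| ≤ (∏ i ∈ s, ‖u i‖) * ‖x‖ ^ #s := by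
  rw [abs_prod, ← prod_const, ← prod_mul_distrib]
  exact prod_le_prod (fun _ _ => abs_nonneg _) fun i _ => abs_real_inner_le_norm _ _

lemma hasLineDerivAt_prod_inner [DecidableEq ι] (u : ι → V) (s : Finset ι) (x v : V) :
    HasLineDerivAt ℝ (fun y => ∏ i ∈ s, ⟪u i, y⟫)
      (∑ j ∈ s, ⟪u j, v⟫ * ∏ i ∈ s.erase j, ⟪u i, x⟫) x v := by
  have := HasFDerivAt.finsetProd (u := s) (x := x) (g := fun i y => ⟪u i, y⟫)
    (fun i _ => (innerSL ℝ (u i)).hasFDerivAt)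
  simpa [mul_comm] using this.hasLineDerivAt v

lemma hasLineDerivAt_exp_neg_mul_sq_norm (b : ℝ) (x v : V) :
    HasLineDerivAt ℝ (fun y => exp (-(b * ‖y‖ ^ 2)))
      (-(2 * b * ⟪v, x⟫) * exp (-(b * ‖x‖ ^ 2))) x v := by
  have hline : HasDerivAt (fun t : ℝ => x + t • v) v 0 := by
    simpa using ((hasDerivAt_id (0 : ℝ)).smul_const v).const_add x
  refine ((hline.norm_sq.const_mul b).neg.exp).congr_deriv ?_
  simp [real_inner_comm]
  ring

variable [FiniteDimensional ℝ V] [MeasurableSpace V] [BorelSpace V] {μ : Measure V}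
  [μ.IsAddHaarMeasure] {b : ℝ}

lemma integrable_prod_inner_mul_exp_neg_mul_sq_norm (hb : 0 < b) (u : ι → V) (s : Finset ι) :
    Integrable (fun x => (∏ i ∈ s, ⟪u i, x⟫) * exp (-(b * ‖x‖ ^ 2))) μ :=
  integrable_mul_exp_neg_mul_sq_norm_of_abs_le (by fun_prop) hb (abs_prod_inner_le u s)

theorem two_mul_integral_inner_mul_mul_exp_neg_mul_sq_norm {f f' : V → ℝ} (v : V)
    (hf : ∀ x, HasLineDerivAt ℝ f (f' x) x v)
    (hf_int : Integrable (fun x => f x * exp (-(b * ‖x‖ ^ 2))) μ)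
    (hf'_int : Integrable (fun x => f' x * exp (-(b * ‖x‖ ^ 2))) μ)
    (hvf_int : Integrable (fun x => ⟪v, x⟫ * f x * exp (-(b * ‖x‖ ^ 2))) μ) :
    2 * b * ∫ x, ⟪v, x⟫ * f x * exp (-(b * ‖x‖ ^ 2)) ∂μ =
      ∫ x, f' x * exp (-(b * ‖x‖ ^ 2)) ∂μ := by
  have hfg'_int : Integrable (fun x => f x * (-(2 * b * ⟪v, x⟫) * exp (-(b * ‖x‖ ^ 2)))) μ := by
    refine (hvf_int.const_mul (-(2 * b))).congr (Filter.Eventually.of_forall fun x => ?_)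
    dsimp only
    ring
  have := integral_bilinear_hasLineDerivAt_right_eq_neg_left_of_integrable
    (B := ContinuousLinearMap.mul ℝ ℝ) hf'_int hfg'_int hf_int (fun x _ => hf x)
    (fun x _ => hasLineDerivAt_exp_neg_mul_sq_norm b x v)
  simp only [ContinuousLinearMap.mul_apply'] at this
  rw [← integral_const_mul, ← neg_neg (∫ x, f' x * _ ∂μ), ← this, ← integral_neg]
  congr 1 with x
  ring

end InnerProductSpace

namespace Wick

section Pairing

variable {ι : Type*} [DecidableEq ι]

def IsPairing (s : Finset ι) (M : Finset (Sym2 ι)) : Prop :=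
  (∀ e ∈ M, ¬ e.IsDiag) ∧ ∀ i, #{e ∈ M | i ∈ e} = if i ∈ s then 1 else 0

variable {s : Finset ι} {M : Finset (Sym2 ι)}

lemma IsPairing.mem_of_mem (h : IsPairing s M) {e : Sym2 ι} (he : e ∈ M) {i : ι} (hi : i ∈ e) :
    i ∈ s := by
  by_contra hs
  have := h.2 i
  rw [if_neg hs, card_eq_zero, filter_eq_empty_iff] at this
  exact this he hi

lemma isPairing_empty_iff : IsPairing ∅ M ↔ M = ∅ := by
  refine ⟨fun h => eq_empty_of_forall_notMem fun e he => ?_, ?_⟩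
  · induction e using Sym2.ind with
    | _ a b => exact notMem_empty a (h.mem_of_mem he (Sym2.mem_mk_left a b))
  · rintro rfl
    simp [IsPairing]

lemma IsPairing.exists_partner (h : IsPairing s M) {a : ι} (ha : a ∈ s) :
    ∃ j ∈ s.erase a, ∀ k, s(a, k) ∈ M ↔ k = j := by
  obtain ⟨e, he⟩ := card_eq_one.mp (by simpa [ha] using h.2 a)
  have heM : e ∈ M ∧ a ∈ e := mem_filter.mp (he ▸ mem_singleton_self e)
  obtain ⟨j, rfl⟩ := Sym2.mem_iff_exists.mp heM.2
  refine ⟨j, mem_erase.mpr ⟨fun hja => h.1 _ heM.1 (by simp [hja]),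
    h.mem_of_mem heM.1 (Sym2.mem_mk_right a j)⟩, fun k => ?_⟩
  have : s(a, k) ∈ M ↔ s(a, k) ∈ ({s(a, j)} : Finset (Sym2 ι)) := by
    rw [← he, mem_filter]
    simp
  rw [this, mem_singleton, Sym2.congr_right]

lemma IsPairing.mk_notMem (h : IsPairing s M) {a : ι} (ha : a ∉ s) (j : ι) : s(a, j) ∉ M :=
  fun hM => ha (h.mem_of_mem hM (Sym2.mem_mk_left a j))

lemma isPairing_iff_erase {a j : ι} (ha : a ∈ s) (hj : j ∈ s.erase a) (he : s(a, j) ∈ M) :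
    IsPairing s M ↔ IsPairing ((s.erase a).erase j) (M.erase s(a, j)) := by
  obtain ⟨hja, hjs⟩ := mem_erase.mp hj
  have hdeg : ∀ i, #{f ∈ M.erase s(a, j) | i ∈ f} + (if i ∈ s(a, j) then 1 else 0) =
      #{f ∈ M | i ∈ f} := by
    intro i
    rw [filter_erase]
    split_ifs with hi
    · exact card_erase_add_one (mem_filter.mpr ⟨he, hi⟩)
    · rw [add_zero, erase_eq_of_notMem]
      simp [hi]
  have hind : ∀ i, (if i ∈ (s.erase a).erase j then 1 else 0) + (if i ∈ s(a, j) then 1 else 0) =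
      if i ∈ s then 1 else 0 := by
    intro i
    by_cases hia : i = a
    · subst hia; simp [ha, hja.symm]
    by_cases hij : i = j
    · subst hij; simp [hjs, hja]
    simp [hia, hij]
  have hdiag : (∀ e ∈ M, ¬ e.IsDiag) ↔ ∀ e ∈ M.erase s(a, j), ¬ e.IsDiag := by
    refine ⟨fun h e he' => h e (mem_of_mem_erase he'), fun h e he' => ?_⟩
    by_cases hea : e = s(a, j)
    · simp [hea, hja.symm]
    · exact h e (mem_erase.mpr ⟨hea, he'⟩)
  refine and_congr hdiag (forall_congr' fun i => ?_)
  rw [← hdeg i, ← hind i, Nat.add_right_cancel_iff]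

variable [Fintype ι] {R : Type*} [CommSemiring R]

noncomputable def pairingSum (w : Sym2 ι → R) (s : Finset ι) : R :=
  ∑ M with IsPairing s M, ∏ e ∈ M, w e

lemma pairingSum_empty (w : Sym2 ι → R) : pairingSum w ∅ = 1 := by
  simp [pairingSum, isPairing_empty_iff, filter_eq']

lemma sum_isPairing_mk_mem {a j : ι} (ha : a ∈ s) (hj : j ∈ s.erase a) (w : Sym2 ι → R) :
    ∑ M with IsPairing s M ∧ s(a, j) ∈ M, ∏ e ∈ M, w e =
      w s(a, j) * pairingSum w ((s.erase a).erase j) := by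
  have hnot : ∀ M', IsPairing ((s.erase a).erase j) M' → s(a, j) ∉ M' := fun M' h =>
    h.mk_notMem (fun has => (mem_erase.mp (mem_of_mem_erase has)).1 rfl) j
  rw [pairingSum, mul_sum]
  refine sum_nbij' (fun M => M.erase s(a, j)) (insert s(a, j)) ?_ ?_ ?_ ?_ ?_
  · intro M hM
    obtain ⟨hpair, he⟩ := (mem_filter.mp hM).2
    exact mem_filter.mpr ⟨mem_univ _, (isPairing_iff_erase ha hj he).mp hpair⟩
  · intro M' hM'
    have hpair := (mem_filter.mp hM').2
    have he := mem_insert_self s(a, j) M'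
    refine mem_filter.mpr ⟨mem_univ _, ?_, he⟩
    rw [isPairing_iff_erase ha hj he, erase_insert (hnot M' hpair)]
    exact hpair
  · intro M hM
    exact insert_erase (mem_filter.mp hM).2.2
  · intro M' hM'
    exact erase_insert (hnot M' (mem_filter.mp hM').2)
  · intro M hM
    exact (mul_prod_erase M w (mem_filter.mp hM).2.2).symm

lemma pairingSum_eq_sum_erase (w : Sym2 ι → R) {a : ι} (ha : a ∈ s) :
    pairingSum w s = ∑ j ∈ s.erase a, w s(a, j) * pairingSum w ((s.erase a).erase j) := by
  calc pairingSum w s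
      = ∑ M with IsPairing s M, ∑ j ∈ s.erase a, if s(a, j) ∈ M then ∏ e ∈ M, w e else 0 := by
        refine sum_congr rfl fun M hM => ?_
        obtain ⟨j₀, hj₀, hpartner⟩ := (mem_filter.mp hM).2.exists_partner ha
        simp_rw [hpartner]
        rw [sum_ite_eq' _ _ _, if_pos hj₀]
    _ = ∑ j ∈ s.erase a, ∑ M with IsPairing s M ∧ s(a, j) ∈ M, ∏ e ∈ M, w e := by
        rw [sum_comm]
        refine sum_congr rfl fun j _ => ?_
        rw [← sum_filter, filter_filter]
    _ = _ := sum_congr rfl fun j hj => sum_isPairing_mk_mem ha hj w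

lemma isPairing_univ_iff (M : Finset (Sym2 ι)) :
    IsPairing univ M ↔ (∀ e ∈ M, ¬ e.IsDiag) ∧ ∀ i, ∃! e, e ∈ M ∧ i ∈ e := by
  simp [IsPairing, card_eq_one, eq_singleton_iff_unique_mem, ExistsUnique]

end Pairing

section Gaussian

variable {V : Type*} [NormedAddCommGroup V] [InnerProductSpace ℝ V] [FiniteDimensional ℝ V]
  [MeasurableSpace V] [BorelSpace V] {μ : Measure V} [μ.IsAddHaarMeasure] {ι : Type*}

theorem integral_prod_inner_mul_exp_neg_mul_sq_norm_of_odd {b : ℝ} (u : ι → V) {s : Finset ι}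
    (hs : Odd #s) : ∫ x, (∏ i ∈ s, ⟪u i, x⟫) * exp (-(b * ‖x‖ ^ 2)) ∂μ = 0 := by
  have hodd : ∀ x : V, (∏ i ∈ s, ⟪u i, -x⟫) * exp (-(b * ‖-x‖ ^ 2)) =
      -((∏ i ∈ s, ⟪u i, x⟫) * exp (-(b * ‖x‖ ^ 2))) := fun x => by
    simp only [inner_neg_right, prod_neg, hs.neg_one_pow, norm_neg]
    ring
  have := integral_neg_eq_self (fun x : V => (∏ i ∈ s, ⟪u i, x⟫) * exp (-(b * ‖x‖ ^ 2))) μ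
  rw [funext hodd, integral_neg] at this
  linarith

theorem integral_prod_inner_mul_exp_neg_mul_sq_norm_eq_sum_erase [DecidableEq ι] {b : ℝ}
    (hb : 0 < b) (u : ι → V) {s : Finset ι} {a : ι} (ha : a ∈ s) :
    ∫ x, (∏ i ∈ s, ⟪u i, x⟫) * exp (-(b * ‖x‖ ^ 2)) ∂μ =
      ∑ j ∈ s.erase a, 1 / (2 * b) * ⟪u a, u j⟫ *
        ∫ x, (∏ i ∈ (s.erase a).erase j, ⟪u i, x⟫) * exp (-(b * ‖x‖ ^ 2)) ∂μ := by
  have hprod : ∀ x, ⟪u a, x⟫ * ∏ i ∈ s.erase a, ⟪u i, x⟫ = ∏ i ∈ s, ⟪u i, x⟫ := fun x =>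
    mul_prod_erase s (fun i => ⟪u i, x⟫) ha
  have hderiv : ∀ x, (∑ j ∈ s.erase a, ⟪u j, u a⟫ * ∏ i ∈ (s.erase a).erase j, ⟪u i, x⟫) *
      exp (-(b * ‖x‖ ^ 2)) = ∑ j ∈ s.erase a, ⟪u j, u a⟫ *
        ((∏ i ∈ (s.erase a).erase j, ⟪u i, x⟫) * exp (-(b * ‖x‖ ^ 2))) := fun x => by
    rw [sum_mul]
    simp only [mul_assoc]
  have hint : ∀ t : Finset ι,
      Integrable (fun x => (∏ i ∈ t, ⟪u i, x⟫) * exp (-(b * ‖x‖ ^ 2))) μ :=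
    integrable_prod_inner_mul_exp_neg_mul_sq_norm hb u
  have stein := two_mul_integral_inner_mul_mul_exp_neg_mul_sq_norm (μ := μ) (u a)
    (hasLineDerivAt_prod_inner u (s.erase a) · (u a)) (hint _)
    (by simp_rw [hderiv]; exact integrable_finsetSum _ fun j _ => (hint _).const_mul _)
    (by simp_rw [hprod]; exact hint s)
  simp_rw [hprod, hderiv] at stein
  simp_rw [integral_finsetSum _ fun j _ => (hint _).const_mul _, integral_const_mul] at stein
  rw [← mul_right_inj' (by positivity : 2 * b ≠ 0), stein, mul_sum]
  refine sum_congr rfl fun j _ => ?_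
  rw [real_inner_comm (u a)]
  field_simp

noncomputable def contraction (b : ℝ) (u : ι → V) : Sym2 ι → ℝ :=
  Sym2.lift ⟨fun i j => 1 / (2 * b) * ⟪u i, u j⟫, fun i j => by dsimp only; rw [real_inner_comm]⟩

theorem integral_prod_inner_mul_exp_neg_mul_sq_norm [Fintype ι] [DecidableEq ι] {b : ℝ}
    (hb : 0 < b) (u : ι → V) (s : Finset ι) :
    ∫ x, (∏ i ∈ s, ⟪u i, x⟫) * exp (-(b * ‖x‖ ^ 2)) ∂μ =
      (∫ x, exp (-(b * ‖x‖ ^ 2)) ∂μ) * pairingSum (contraction b u) s := by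
  induction s using Finset.strongInduction with
  | H s ih =>
    rcases s.eq_empty_or_nonempty with rfl | ⟨a, ha⟩
    · simp [pairingSum_empty]
    rw [integral_prod_inner_mul_exp_neg_mul_sq_norm_eq_sum_erase hb u ha,
      pairingSum_eq_sum_erase _ ha, mul_sum]
    refine sum_congr rfl fun j _ => ?_
    rw [ih _ ((erase_subset j _).trans_ssubset (erase_ssubset ha)), contraction, Sym2.lift_mk]
    ring

end Gaussian

end Wick

/-- Wick's theorem for the free Gaussian theory with action `S(x) = R²‖x‖²` on
`EuclideanSpace ℝ (Fin n)`.  Linear observables are identified with vectors `O i` via the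
inner product.  The normalized Gaussian moment vanishes for an odd number of insertions,
and for any number of insertions it is the sum over perfect matchings `M` of `{1,…,k}`
(encoded as finsets of unordered pairs covering each index exactly once, with no diagonal
pairs) of the product over matched pairs `{i,j}` of `(1/(2R²))⟪O i, O j⟫`. -/
theorem stmt1 (n k : ℕ) (R : ℝ) (hR : 0 < R)
    (O : Fin k → EuclideanSpace ℝ (Fin n)) :
    (Odd k →
      (∫ x : EuclideanSpace ℝ (Fin n),
          (∏ i, ⟪O i, x⟫) * Real.exp (-(R ^ 2 * ‖x‖ ^ 2))) /
        (∫ x : EuclideanSpace ℝ (Fin n), Real.exp (-(R ^ 2 * ‖x‖ ^ 2))) = 0) ∧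
    (∫ x : EuclideanSpace ℝ (Fin n),
        (∏ i, ⟪O i, x⟫) * Real.exp (-(R ^ 2 * ‖x‖ ^ 2))) /
      (∫ x : EuclideanSpace ℝ (Fin n), Real.exp (-(R ^ 2 * ‖x‖ ^ 2))) =
      ∑ M : Finset (Sym2 (Fin k)),
        (if (∀ e ∈ M, ¬ e.IsDiag) ∧ (∀ i : Fin k, ∃! e, e ∈ M ∧ i ∈ e) then
          ∏ e ∈ M, Sym2.lift
            ⟨fun i j => (1 / (2 * R ^ 2)) * ⟪O i, O j⟫,
             fun i j => by simp [real_inner_comm, mul_comm]⟩ e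
        else 0) := by
  have hb : 0 < R ^ 2 := by positivity
  have hZ : 0 < ∫ x : EuclideanSpace ℝ (Fin n), exp (-(R ^ 2 * ‖x‖ ^ 2)) :=
    integral_exp_pos (by simpa using integrable_norm_pow_mul_exp_neg_mul_sq_norm hb 0)
  refine ⟨fun hk => ?_, ?_⟩
  · rw [Wick.integral_prod_inner_mul_exp_neg_mul_sq_norm_of_odd O (by simpa using hk), zero_div]
  · rw [Wick.integral_prod_inner_mul_exp_neg_mul_sq_norm hb O univ, mul_div_cancel_left₀ _ hZ.ne',
      Wick.pairingSum, sum_filter]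
    exact sum_congr rfl fun M _ => if_congr (Wick.isPairing_univ_iff M) rfl rfl
end

section
/- Let V be a finite-dimensional real inner product space and S_R(x) = R²‖x‖². For a linear functional O on V, a real number r, and the observable O_{β,r}(a) = exp(i r ⟨a, β⟩) with β ∈ V, the Fourier-type transform F(ã) = [(1/Z)∫_V e^{−S_R(a) + i⟨ã,a⟩ + i r⟨a,β⟩} da] · e^{S_{1/2R}(ã)} equals e^{−r²‖β‖²/(4R²)} · e^{−(r/(2R²))⟨ã,β⟩}. -/
open MeasureTheory Real
open scoped RealInnerProductSpace

/-- The Fourier-type transform of the plane-wave observable `O_{β,r}(a) = exp(i r ⟪a,β⟫)`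
in the free theory with action `S_R(a) = R²‖a‖²`:
`F(ã) = [(1/Z) ∫ e^{-S_R(a) + i⟪ã,a⟫ + ir⟪a,β⟫} da] · e^{S_{1/2R}(ã)}`
equals `e^{-r²‖β‖²/(4R²)} · e^{-(r/(2R²))⟪ã,β⟫}`. -/
theorem stmt2 (n : ℕ) (R r : ℝ) (hR : 0 < R)
    (β atil : EuclideanSpace ℝ (Fin n)) :
    ((∫ a : EuclideanSpace ℝ (Fin n),
        Complex.exp (-((R ^ 2 * ‖a‖ ^ 2 : ℝ) : ℂ) + Complex.I * ((⟪atil, a⟫ : ℝ) : ℂ) +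
          Complex.I * (r : ℂ) * ((⟪a, β⟫ : ℝ) : ℂ))) /
        ((∫ a : EuclideanSpace ℝ (Fin n), Real.exp (-(R ^ 2 * ‖a‖ ^ 2)) : ℝ) : ℂ)) *
      Complex.exp (((‖atil‖ ^ 2 / (4 * R ^ 2) : ℝ) : ℂ)) =
    Complex.exp (-((r ^ 2 * ‖β‖ ^ 2 / (4 * R ^ 2) : ℝ) : ℂ)) *
      Complex.exp (-((r / (2 * R ^ 2) * ⟪atil, β⟫ : ℝ) : ℂ)) := by
  have hR2 : (0:ℝ) < R ^ 2 := by positivity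
  have hbre : (0:ℝ) < (((R:ℂ)^2)).re := by rw [← Complex.ofReal_pow, Complex.ofReal_re]; exact hR2
  set w : EuclideanSpace ℝ (Fin n) := atil + r • β with hw
  have hnum : (∫ a : EuclideanSpace ℝ (Fin n),
      Complex.exp (-((R ^ 2 * ‖a‖ ^ 2 : ℝ) : ℂ) + Complex.I * ((⟪atil, a⟫ : ℝ) : ℂ) +
        Complex.I * (r : ℂ) * ((⟪a, β⟫ : ℝ) : ℂ))) =
      ∫ a : EuclideanSpace ℝ (Fin n),
        Complex.exp (-((R:ℂ)^2) * (‖a‖:ℂ) ^ 2 + Complex.I * ((⟪w, a⟫ : ℝ) : ℂ)) := by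
    congr 1; ext a
    congr 1
    rw [hw, inner_add_left, real_inner_smul_left, real_inner_comm β a]
    push_cast
    ring
  rw [hnum, GaussianFourier.integral_cexp_neg_mul_sq_norm_add_of_euclideanSpace hbre Complex.I w]
  have hden : (∫ a : EuclideanSpace ℝ (Fin n), Real.exp (-(R ^ 2 * ‖a‖ ^ 2)) : ℝ) =
      (π / R ^ 2) ^ ((n : ℝ) / 2) := by
    have := GaussianFourier.integral_rexp_neg_mul_sq_norm (V := EuclideanSpace ℝ (Fin n)) hR2
    simp only [neg_mul] at this ⊢
    rw [this, finrank_euclideanSpace_fin]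
  rw [hden]
  have hcast : ((((π / R ^ 2) ^ ((n : ℝ) / 2) : ℝ)) : ℂ)
      = ((π : ℂ) / (R:ℂ)^2) ^ ((Fintype.card (Fin n) : ℂ) / 2) := by
    rw [Complex.ofReal_cpow (by positivity)]
    push_cast
    norm_num
  rw [hcast]
  have hne : ((π : ℂ) / (R:ℂ)^2) ^ ((Fintype.card (Fin n) : ℂ) / 2) ≠ 0 := by
    rw [Ne, Complex.cpow_eq_zero_iff]
    intro h
    have : (π : ℂ) / (R:ℂ)^2 ≠ 0 := by
      apply div_ne_zero
      · exact_mod_cast Real.pi_ne_zero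
      · exact_mod_cast pow_ne_zero 2 hR.ne'
    exact this h.1
  rw [mul_comm (((π : ℂ) / (R:ℂ)^2) ^ ((Fintype.card (Fin n) : ℂ) / 2)), mul_div_assoc,
    div_self hne, mul_one, ← Complex.exp_add, ← Complex.exp_add]
  congr 1
  have hw2 : ‖w‖ ^ 2 = ‖atil‖ ^ 2 + 2 * (r * ⟪atil, β⟫) + r ^ 2 * ‖β‖ ^ 2 := by
    rw [hw, norm_add_sq_real, real_inner_smul_right, norm_smul]
    simp [mul_pow, sq_abs]
  rw [Complex.I_sq, show ((‖w‖:ℂ)) ^ 2 = ((‖w‖ ^ 2 : ℝ) : ℂ) by push_cast; ring, hw2]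
  have hRc : ((R:ℂ)) ≠ 0 := by exact_mod_cast hR.ne'
  push_cast
  field_simp
  ring
end

section
/- Let L be a full-rank lattice in a finite-dimensional real inner product space H. The Fourier transform (as a tempered distribution) of the counting measure δ_L = Σ_{ℓ∈L} δ_ℓ is, up to a positive constant, the counting measure δ_{L*} on the dual lattice L* = {v ∈ H : ⟨v,ℓ⟩ ∈ 2πℤ for all ℓ ∈ L}. -/
/-!
The substitution `x ↦ ((2π)⁻¹ ⟪B i, x⟫)ᵢ` carries the dual lattice onto `ℤⁿ` and turns the
`ℓ`-th integral into `|det|⁻¹ 𝓕 g (ℓ)` for a Schwartz function `g`, so the statement reduces to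
Poisson summation `∑ 𝓕 g (ℓ) = ∑ g (ℓ)` over `ℤⁿ ⊂ ℝⁿ`. That is proved by induction on `n`:
splitting `ℝⁿ⁺¹ = ℝ × ℝⁿ`, one-dimensional Poisson summation is applied to the Fourier transform of
`g` in the last `n` variables, and the induction hypothesis to each slice `g (k, ·)`. The analytic
input is that this partial Fourier transform decays in both variables (in the first by
integrating the decay of `g`, in the second by Fourier inversion in the first variable), which
makes the double series over `ℤ × ℤⁿ` absolutely convergent and lets its order be swapped.
-/

open MeasureTheory Real
open scoped RealInnerProductSpace FourierTransform SchwartzMap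

noncomputable section

local notation "ℝ^" n:max => EuclideanSpace ℝ (Fin n)

theorem summable_int_one_add_abs_sq_inv : Summable fun k : ℤ => ((1 + |(k : ℝ)|) ^ 2)⁻¹ := by
  have h : Summable fun k : ℕ => ((1 + (k : ℝ)) ^ 2)⁻¹ := by
    simpa [add_comm] using (summable_nat_add_iff 1).2
      (Real.summable_nat_pow_inv.2 one_lt_two)
  exact .of_nat_of_neg (by simpa using h) (by simpa using h)

theorem summable_prod_one_add_abs_sq_inv (n : ℕ) :
    Summable fun l : Fin n → ℤ => ∏ i, ((1 + |(l i : ℝ)|) ^ 2)⁻¹ := by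
  induction n with
  | zero => exact .of_finite
  | succ n ih =>
    refine (Fin.consEquiv fun _ => ℤ).summable_iff.1 ?_
    refine (summable_int_one_add_abs_sq_inv.mul_of_nonneg ih (fun _ => by positivity)
      (fun _ => by positivity)).congr fun p => ?_
    simp [Fin.consEquiv, Fin.prod_univ_succ, mul_comm]

def intPoint {n : ℕ} (l : Fin n → ℤ) : ℝ^n := WithLp.toLp 2 fun i => (l i : ℝ)

@[simp] theorem intPoint_apply {n : ℕ} (l : Fin n → ℤ) (i : Fin n) : intPoint l i = l i := rfl

theorem summable_of_norm_le_one_add_norm_intPoint {n : ℕ} {F : Type*} [NormedAddCommGroup F]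
    [CompleteSpace F] {g : (Fin n → ℤ) → F} {C : ℝ}
    (hg : ∀ l, ‖g l‖ ≤ C * ((1 + ‖intPoint l‖) ^ (2 * n))⁻¹) : Summable g := by
  have hC : 0 ≤ C := nonneg_of_mul_nonneg_left ((norm_nonneg _).trans (hg 0)) (by positivity)
  refine .of_norm_bounded ((summable_prod_one_add_abs_sq_inv n).mul_left C) fun l => ?_
  refine (hg l).trans (mul_le_mul_of_nonneg_left ?_ hC)
  rw [pow_mul, ← Fin.prod_const, ← Finset.prod_inv_distrib]
  gcongr with i
  simpa using PiLp.norm_apply_le (intPoint l) i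

theorem SchwartzMap.exists_norm_le_one_add_norm_pow_inv {V F : Type*} [NormedAddCommGroup V]
    [NormedSpace ℝ V] [NormedAddCommGroup F] [NormedSpace ℝ F] (f : 𝓢(V, F)) (k : ℕ) :
    ∃ C, 0 ≤ C ∧ ∀ x, ‖f x‖ ≤ C * ((1 + ‖x‖) ^ k)⁻¹ := by
  refine ⟨2 ^ k * (Finset.Iic (k, 0)).sup (fun m => SchwartzMap.seminorm ℝ m.1 m.2) f,
    by positivity, fun x => ?_⟩
  have h := SchwartzMap.one_add_le_sup_seminorm_apply (𝕜 := ℝ) (m := (k, 0)) le_rfl le_rfl f x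
  rw [norm_iteratedFDeriv_zero] at h
  rw [← div_eq_mul_inv, le_div_iff₀ (by positivity), mul_comm]
  exact h

theorem SchwartzMap.summable_intPoint {n : ℕ} {F : Type*} [NormedAddCommGroup F]
    [NormedSpace ℝ F] [CompleteSpace F] (f : 𝓢(ℝ^n, F)) : Summable fun l => f (intPoint l) := by
  obtain ⟨C, -, hC⟩ := f.exists_norm_le_one_add_norm_pow_inv (2 * n)
  exact summable_of_norm_le_one_add_norm_intPoint fun l => hC _

theorem integrable_one_add_norm_pow_inv {V : Type*} [NormedAddCommGroup V] [NormedSpace ℝ V]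
    [FiniteDimensional ℝ V] [MeasurableSpace V] [BorelSpace V] (μ : Measure V)
    [μ.IsAddHaarMeasure] {k : ℕ} (hk : Module.finrank ℝ V < k) :
    Integrable (fun x : V => ((1 + ‖x‖) ^ k)⁻¹) μ := by
  refine (integrable_one_add_norm (μ := μ) (r := k) (by exact_mod_cast hk)).congr
    (.of_forall fun x => ?_)
  simp [Real.rpow_neg (by positivity : (0 : ℝ) ≤ 1 + ‖x‖)]

namespace EuclideanSpace

def consL (n : ℕ) : (ℝ × ℝ^n) ≃L[ℝ] ℝ^(n + 1) :=
  ((ContinuousLinearEquiv.refl ℝ ℝ).prodCongr (EuclideanSpace.equiv (Fin n) ℝ)).trans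
    ((Fin.consEquivL ℝ fun _ => ℝ).trans (EuclideanSpace.equiv (Fin (n + 1)) ℝ).symm)

variable {n : ℕ}

theorem inner_consL (p q : ℝ × ℝ^n) : ⟪consL n p, consL n q⟫ = ⟪p.1, q.1⟫ + ⟪p.2, q.2⟫ := by
  rw [PiLp.inner_apply, PiLp.inner_apply, Fin.sum_univ_succ]
  rfl

theorem norm_consL_sq (p : ℝ × ℝ^n) : ‖consL n p‖ ^ 2 = ‖p.1‖ ^ 2 + ‖p.2‖ ^ 2 := by
  rw [← real_inner_self_eq_norm_sq, inner_consL, real_inner_self_eq_norm_sq,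
    real_inner_self_eq_norm_sq]

theorem norm_fst_le_norm_consL (p : ℝ × ℝ^n) : ‖p.1‖ ≤ ‖consL n p‖ :=
  abs_le_of_sq_le_sq' (by nlinarith [norm_consL_sq p, sq_nonneg ‖p.2‖]) (norm_nonneg _) |>.2

theorem norm_snd_le_norm_consL (p : ℝ × ℝ^n) : ‖p.2‖ ≤ ‖consL n p‖ :=
  abs_le_of_sq_le_sq' (by nlinarith [norm_consL_sq p, sq_nonneg ‖p.1‖]) (norm_nonneg _) |>.2

theorem norm_consL_le (p : ℝ × ℝ^n) : ‖consL n p‖ ≤ ‖p.1‖ + ‖p.2‖ :=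
  abs_le_of_sq_le_sq' (by nlinarith [norm_consL_sq p, norm_nonneg p.1, norm_nonneg p.2])
    (by positivity) |>.2

theorem one_add_norm_consL_le (p : ℝ × ℝ^n) :
    1 + ‖consL n p‖ ≤ (1 + ‖p.1‖) * (1 + ‖p.2‖) := by
  nlinarith [norm_consL_le p, norm_nonneg p.1, norm_nonneg p.2]

theorem intPoint_cons (k : ℤ) (l : Fin n → ℤ) :
    intPoint (Fin.cons k l : Fin (n + 1) → ℤ) = consL n (k, intPoint l) := by
  ext i
  induction i using Fin.cases <;> rfl

theorem summable_consL_intPoint {F : Type*} [NormedAddCommGroup F] {g : ℝ^(n + 1) → F}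
    (hg : Summable fun m => g (intPoint m)) :
    Summable (Function.uncurry fun (k : ℤ) (l : Fin n → ℤ) => g (consL n (k, intPoint l))) := by
  exact ((Fin.consEquiv fun _ => ℤ).summable_iff.2 hg).congr fun p : ℤ × (Fin n → ℤ) =>
    congrArg g (intPoint_cons p.1 p.2)

theorem tsum_intPoint_succ {F : Type*} [NormedAddCommGroup F] [CompleteSpace F]
    {g : ℝ^(n + 1) → F} (hg : Summable fun m => g (intPoint m)) :
    ∑' m, g (intPoint m) = ∑' (k : ℤ) (l : Fin n → ℤ), g (consL n (k, intPoint l)) := by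
  rw [← (Fin.consEquiv fun _ => ℤ).tsum_eq]
  exact (tsum_congr fun p : ℤ × (Fin n → ℤ) => congrArg g (intPoint_cons p.1 p.2)).trans
    (summable_consL_intPoint hg).tsum_prod

theorem measurePreserving_consL : MeasurePreserving (consL n) (volume.prod volume) volume := by
  have h := ((volume_preserving_piFinSuccAbove (fun _ : Fin (n + 1) => ℝ) 0).symm).comp
    ((MeasurePreserving.id volume).prod (PiLp.volume_preserving_ofLp (Fin n)))
  have hcons : ⇑(consL n) = WithLp.toLp 2 ∘ (MeasurableEquiv.piFinSuccAbove (fun _ => ℝ) 0).symm ∘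
      Prod.map id WithLp.ofLp := by
    funext p
    ext i
    induction i using Fin.cases <;> rfl
  rw [hcons]
  exact (PiLp.volume_preserving_toLp (Fin (n + 1))).comp h

end EuclideanSpace

open EuclideanSpace

theorem norm_le_sqrt_mul_one_add_norm_consL_pow_inv {n N : ℕ} {F : Type*} [NormedAddCommGroup F]
    {z : F} {A B : ℝ} {p : ℝ × ℝ^n} (hA : ‖z‖ ≤ A * ((1 + ‖p.1‖) ^ (2 * N))⁻¹)
    (hB : ‖z‖ ≤ B * ((1 + ‖p.2‖) ^ (2 * N))⁻¹) :
    ‖z‖ ≤ √(A * B) * ((1 + ‖consL n p‖) ^ N)⁻¹ := by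
  have hA₀ : 0 ≤ A := nonneg_of_mul_nonneg_left ((norm_nonneg _).trans hA) (by positivity)
  have hB₀ : 0 ≤ B := nonneg_of_mul_nonneg_left ((norm_nonneg _).trans hB) (by positivity)
  refine (pow_le_pow_iff_left₀ (norm_nonneg z) (by positivity) two_ne_zero).1 ?_
  calc ‖z‖ ^ 2 = ‖z‖ * ‖z‖ := sq _
    _ ≤ (A * ((1 + ‖p.1‖) ^ (2 * N))⁻¹) * (B * ((1 + ‖p.2‖) ^ (2 * N))⁻¹) :=
        mul_le_mul hA hB (norm_nonneg z) ((norm_nonneg z).trans hA)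
    _ = A * B * (((1 + ‖p.1‖) * (1 + ‖p.2‖)) ^ (2 * N))⁻¹ := by rw [mul_pow]; ring
    _ ≤ A * B * ((1 + ‖consL n p‖) ^ (2 * N))⁻¹ := by
        gcongr
        exact one_add_norm_consL_le p
    _ = (√(A * B) * ((1 + ‖consL n p‖) ^ N)⁻¹) ^ 2 := by
        rw [mul_pow, Real.sq_sqrt (by positivity), inv_pow, ← pow_mul, mul_comm N]

theorem hasTemperateGrowth_prodMk_left {E F : Type*} [NormedAddCommGroup E] [NormedSpace ℝ E]
    [NormedAddCommGroup F] [NormedSpace ℝ F] (x : E) :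
    Function.HasTemperateGrowth fun y : F => (x, y) := by
  convert (ContinuousLinearMap.inr ℝ E F).hasTemperateGrowth.add
    (Function.HasTemperateGrowth.const (x, (0 : F))) using 1
  ext y <;> simp

theorem isBigO_cocompact_rpow_neg_of_norm_le {F : Type*} [NormedAddCommGroup F] {g : ℝ → F}
    {C : ℝ} {k : ℕ} (h : ∀ t, ‖g t‖ ≤ C * ((1 + ‖t‖) ^ k)⁻¹) :
    g =O[Filter.cocompact ℝ] (|·| ^ (-(k : ℝ))) := by
  have hC : 0 ≤ C := nonneg_of_mul_nonneg_left ((norm_nonneg _).trans (h 0)) (by positivity)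
  refine .of_bound C ?_
  filter_upwards [(isCompact_singleton (x := (0 : ℝ))).compl_mem_cocompact] with t ht
  have ht : 0 < |t| := abs_pos.2 ht
  rw [Real.rpow_neg ht.le, Real.rpow_natCast, norm_inv, norm_pow, Real.norm_eq_abs, abs_abs]
  refine (h t).trans (mul_le_mul_of_nonneg_left ?_ hC)
  gcongr
  simp [Real.norm_eq_abs]

namespace SchwartzMap

variable {n : ℕ} {F : Type*} [NormedAddCommGroup F] [NormedSpace ℝ F]

theorem exists_norm_comp_consL_le (f : 𝓢(ℝ^(n + 1), F)) (a b : ℕ) :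
    ∃ C, 0 ≤ C ∧ ∀ p : ℝ × ℝ^n,
      ‖f (consL n p)‖ ≤ C * ((1 + ‖p.1‖) ^ a)⁻¹ * ((1 + ‖p.2‖) ^ b)⁻¹ := by
  obtain ⟨C, hC, hf⟩ := f.exists_norm_le_one_add_norm_pow_inv (a + b)
  refine ⟨C, hC, fun p => (hf _).trans ?_⟩
  rw [mul_assoc, ← mul_inv, pow_add]
  gcongr
  exacts [norm_fst_le_norm_consL p, norm_snd_le_norm_consL p]

def slice (f : 𝓢(ℝ^(n + 1), F)) (t : ℝ) : 𝓢(ℝ^n, F) :=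
  compCLMOfAntilipschitz ℝ (g := fun y => consL n (t, y))
    ((consL n).hasTemperateGrowth.comp (hasTemperateGrowth_prodMk_left t))
    (AntilipschitzWith.of_le_mul_dist fun y y' => by
      rw [NNReal.coe_one, one_mul, dist_eq_norm, dist_eq_norm, ← map_sub, Prod.mk_sub_mk, sub_self]
      exact norm_snd_le_norm_consL (0, y - y')) f

def partialFourier (f : 𝓢(ℝ^(n + 1), ℂ)) (ξ : ℝ^n) (t : ℝ) : ℂ := 𝓕 (f.slice t) ξ

theorem partialFourier_eq (f : 𝓢(ℝ^(n + 1), ℂ)) (ξ : ℝ^n) :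
    partialFourier f ξ = fun t => ∫ y, 𝐞 (-⟪y, ξ⟫) • f (consL n (t, y)) := by
  ext t
  rw [partialFourier, fourier_coe, Real.fourier_eq]
  rfl

theorem continuous_partialFourier (f : 𝓢(ℝ^(n + 1), ℂ)) (ξ : ℝ^n) :
    Continuous (partialFourier f ξ) := by
  obtain ⟨C, -, hC⟩ := f.exists_norm_comp_consL_le 0 (n + 1)
  rw [partialFourier_eq]
  refine continuous_of_dominated (bound := fun y => C * ((1 + ‖y‖) ^ (n + 1))⁻¹)
    (fun t => by fun_prop) (fun t => .of_forall fun y => ?_)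
    ((integrable_one_add_norm_pow_inv volume (by simp)).const_mul C)
    (.of_forall fun y => by fun_prop)
  simpa [Circle.norm_smul] using hC (t, y)

theorem exists_norm_partialFourier_le_left (f : 𝓢(ℝ^(n + 1), ℂ)) (a : ℕ) :
    ∃ C, 0 ≤ C ∧ ∀ ξ t, ‖partialFourier f ξ t‖ ≤ C * ((1 + ‖t‖) ^ a)⁻¹ := by
  obtain ⟨C, hC₀, hC⟩ := f.exists_norm_comp_consL_le a (n + 1)
  have hI := integrable_one_add_norm_pow_inv (volume : Measure (ℝ^n)) (k := n + 1) (by simp)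
  refine ⟨C * ∫ y : ℝ^n, ((1 + ‖y‖) ^ (n + 1))⁻¹,
    mul_nonneg hC₀ (integral_nonneg fun _ => by positivity), fun ξ t => ?_⟩
  rw [partialFourier_eq]
  calc _ ≤ ∫ y : ℝ^n, C * ((1 + ‖t‖) ^ a)⁻¹ * ((1 + ‖y‖) ^ (n + 1))⁻¹ :=
        norm_integral_le_of_norm_le (hI.const_mul _)
          (.of_forall fun y => by simpa [Circle.norm_smul] using hC (t, y))
    _ = _ := by rw [integral_const_mul]; ring

theorem integrable_partialFourier (f : 𝓢(ℝ^(n + 1), ℂ)) (ξ : ℝ^n) :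
    Integrable (partialFourier f ξ) := by
  obtain ⟨C, -, hC⟩ := exists_norm_partialFourier_le_left f 2
  exact ((integrable_one_add_norm_pow_inv volume (by simp)).const_mul C).mono'
    (continuous_partialFourier f ξ).aestronglyMeasurable (.of_forall (hC ξ))

theorem fourier_partialFourier (f : 𝓢(ℝ^(n + 1), ℂ)) (ξ : ℝ^n) (κ : ℝ) :
    𝓕 (partialFourier f ξ) κ = 𝓕 f (consL n (κ, ξ)) := by
  have hemb := (consL n).toHomeomorph.measurableEmbedding
  have hint : Integrable (fun p => 𝐞 (-⟪consL n p, consL n (κ, ξ)⟫) • f (consL n p))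
      (volume.prod volume) := (measurePreserving_consL.integrable_comp_emb hemb).2
    ((Real.fourierIntegral_convergent_iff (consL n (κ, ξ))).2 f.integrable)
  rw [fourier_coe, Real.fourier_eq, Real.fourier_eq, ← measurePreserving_consL.integral_comp hemb,
    integral_prod _ hint, partialFourier_eq]
  refine integral_congr_ae (.of_forall fun t => ?_)
  simp only [inner_consL, neg_add, AddChar.map_add_eq_mul, mul_smul, Circle.smul_def,
    integral_smul]

theorem exists_norm_partialFourier_le_right (f : 𝓢(ℝ^(n + 1), ℂ)) (b : ℕ) :
    ∃ C, 0 ≤ C ∧ ∀ ξ t, ‖partialFourier f ξ t‖ ≤ C * ((1 + ‖ξ‖) ^ b)⁻¹ := by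
  obtain ⟨C, hC₀, hC⟩ := (𝓕 f).exists_norm_comp_consL_le 2 b
  have hJ := integrable_one_add_norm_pow_inv (volume : Measure ℝ) (k := 2) (by simp)
  refine ⟨C * ∫ κ : ℝ, ((1 + ‖κ‖) ^ 2)⁻¹,
    mul_nonneg hC₀ (integral_nonneg fun _ => by positivity), fun ξ t => ?_⟩
  have hF : Integrable (𝓕 (partialFourier f ξ)) := by
    refine (hJ.mul_const (C * ((1 + ‖ξ‖) ^ b)⁻¹)).mono' ?_ (.of_forall fun κ => ?_)
    · rw [show 𝓕 (partialFourier f ξ) = fun κ => 𝓕 f (consL n (κ, ξ)) from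
        funext (fourier_partialFourier f ξ)]
      fun_prop
    · rw [fourier_partialFourier]
      linarith [hC (κ, ξ)]
  rw [← (integrable_partialFourier f ξ).fourierInv_fourier_eq hF
    (continuous_partialFourier f ξ).continuousAt, Real.fourierInv_eq]
  calc _ ≤ ∫ κ : ℝ, C * ((1 + ‖κ‖) ^ 2)⁻¹ * ((1 + ‖ξ‖) ^ b)⁻¹ :=
        norm_integral_le_of_norm_le (hJ.const_mul C |>.mul_const _) (.of_forall fun κ => by
          simpa [Circle.norm_smul, fourier_partialFourier] using hC (κ, ξ))
    _ = _ := by rw [integral_mul_const, integral_const_mul]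

theorem tsum_fourier_consL_int (f : 𝓢(ℝ^(n + 1), ℂ)) (ξ : ℝ^n) :
    ∑' k : ℤ, 𝓕 f (consL n (k, ξ)) = ∑' k : ℤ, partialFourier f ξ k := by
  obtain ⟨A, -, hA⟩ := exists_norm_partialFourier_le_left f 2
  obtain ⟨B, -, hB⟩ := (𝓕 f).exists_norm_comp_consL_le 2 0
  have hFA (κ : ℝ) : ‖𝓕 (partialFourier f ξ) κ‖ ≤ B * ((1 + ‖κ‖) ^ 2)⁻¹ := by
    simpa [fourier_partialFourier] using hB (κ, ξ)
  have := Real.tsum_eq_tsum_fourier_of_rpow_decay (continuous_partialFourier f ξ)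
    (by norm_num) (isBigO_cocompact_rpow_neg_of_norm_le (hA ξ))
    (isBigO_cocompact_rpow_neg_of_norm_le hFA) 0
  simp only [zero_add, QuotientAddGroup.mk_zero, fourier_eval_zero, mul_one,
    fourier_partialFourier] at this
  exact this.symm

theorem summable_partialFourier (f : 𝓢(ℝ^(n + 1), ℂ)) :
    Summable (Function.uncurry fun (k : ℤ) (l : Fin n → ℤ) => partialFourier f (intPoint l) k) := by
  obtain ⟨A, -, hA⟩ := exists_norm_partialFourier_le_left f (2 * (2 * (n + 1)))
  obtain ⟨B, -, hB⟩ := exists_norm_partialFourier_le_right f (2 * (2 * (n + 1)))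
  have hm (m : Fin (n + 1) → ℤ) : intPoint m = consL n (m 0, intPoint (Fin.tail m)) := by
    rw [← intPoint_cons, Fin.cons_self_tail]
  have := summable_of_norm_le_one_add_norm_intPoint (C := √(A * B))
    (g := fun m => partialFourier f (intPoint (Fin.tail m)) (m 0)) fun m => by
      rw [hm]
      exact norm_le_sqrt_mul_one_add_norm_consL_pow_inv (hA _ _) (hB _ _)
  exact (Fin.consEquiv fun _ => ℤ).summable_iff.2 this

end SchwartzMap

theorem SchwartzMap.tsum_fourier_intPoint {n : ℕ} (f : 𝓢(ℝ^n, ℂ)) :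
    ∑' l, 𝓕 f (intPoint l) = ∑' l, f (intPoint l) := by
  induction n with
  | zero =>
    have h (w : ℝ^0) : 𝓕 f w = f w := by
      rw [fourier_coe, Real.fourier_eq, volume_euclideanSpace_eq_dirac, integral_dirac,
        Subsingleton.elim w 0]
      simp
    simp [h]
  | succ n ih => calc
      ∑' m, 𝓕 f (intPoint m)
        = ∑' (k : ℤ) (l : Fin n → ℤ), 𝓕 f (consL n (k, intPoint l)) :=
          tsum_intPoint_succ (𝓕 f).summable_intPoint
      _ = ∑' (l : Fin n → ℤ) (k : ℤ), 𝓕 f (consL n (k, intPoint l)) :=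
          (summable_consL_intPoint (𝓕 f).summable_intPoint).tsum_comm.symm
      _ = ∑' (l : Fin n → ℤ) (k : ℤ), f.partialFourier (intPoint l) k :=
          tsum_congr fun l => f.tsum_fourier_consL_int (intPoint l)
      _ = ∑' (k : ℤ) (l : Fin n → ℤ), f.partialFourier (intPoint l) k :=
          f.summable_partialFourier.tsum_comm
      _ = ∑' (k : ℤ) (l : Fin n → ℤ), f (consL n (k, intPoint l)) :=
          tsum_congr fun k => ih (f.slice k)
      _ = ∑' m, f (intPoint m) := (tsum_intPoint_succ f.summable_intPoint).symm

theorem integral_comp_continuousLinearEquiv {E F : Type*} [NormedAddCommGroup E]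
    [NormedSpace ℝ E] [FiniteDimensional ℝ E] [MeasurableSpace E] [BorelSpace E]
    (μ : Measure E) [μ.IsAddHaarMeasure] [NormedAddCommGroup F] [NormedSpace ℝ F]
    (A : E ≃L[ℝ] E) (g : E → F) :
    ∫ x, g (A x) ∂μ = |LinearMap.det (A : E →ₗ[ℝ] E)|⁻¹ • ∫ y, g y ∂μ := by
  have hdet : LinearMap.det (A : E →ₗ[ℝ] E) ≠ 0 :=
    (LinearEquiv.isUnit_det' A.toLinearEquiv).ne_zero
  have hmap : μ.map A = ENNReal.ofReal |(LinearMap.det (A : E →ₗ[ℝ] E))⁻¹| • μ :=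
    μ.map_linearMap_addHaar_eq_smul_addHaar hdet
  have hemb : MeasurableEmbedding A := A.toHomeomorph.measurableEmbedding
  rw [← hemb.integral_map g, hmap, integral_smul_measure, ENNReal.toReal_ofReal (abs_nonneg _),
    abs_inv]

section DualLattice

variable {n : ℕ} (B : Module.Basis (Fin n) ℝ (ℝ^n))

def dualCoord : ℝ^n ≃L[ℝ] ℝ^n :=
  let L : ℝ^n →ₗ[ℝ] ℝ^n := (EuclideanSpace.equiv (Fin n) ℝ).symm.toLinearMap ∘ₗ
    LinearMap.pi fun i => (2 * π)⁻¹ • innerₛₗ ℝ (B i)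
  (LinearEquiv.ofInjectiveEndo L fun x y h => InnerProductSpace.ext_inner_left_basis B fun i => by
    have := congr($h i)
    simpa [L] using this).toContinuousLinearEquiv

@[simp] theorem dualCoord_apply (x : ℝ^n) (i : Fin n) :
    dualCoord B x i = (2 * π)⁻¹ * ⟪B i, x⟫ := rfl

theorem inner_basis_eq_dualCoord (v : ℝ^n) (i : Fin n) : ⟪v, B i⟫ = 2 * π * dualCoord B v i := by
  rw [dualCoord_apply, ← mul_assoc, mul_inv_cancel₀ (by positivity), one_mul, real_inner_comm]

theorem inner_sum_smul_basis (l : Fin n → ℤ) (x : ℝ^n) :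
    ⟪∑ i, (l i : ℝ) • B i, x⟫ = 2 * π * ⟪dualCoord B x, intPoint l⟫ := by
  rw [sum_inner, PiLp.inner_apply (dualCoord B x), Finset.mul_sum]
  refine Finset.sum_congr rfl fun i _ => ?_
  rw [real_inner_smul_left, real_inner_comm x, inner_basis_eq_dualCoord]
  simp only [intPoint_apply, RCLike.inner_apply, conj_trivial]
  ring

def dualLatticeEquiv :
    (Fin n → ℤ) ≃ {v : ℝ^n // ∀ i, ∃ m : ℤ, ⟪v, B i⟫ = 2 * π * m} := by
  refine Equiv.ofBijective (fun l => ⟨(dualCoord B).symm (intPoint l), fun i => ⟨l i, ?_⟩⟩)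
    ⟨fun l l' h => ?_, fun v => ?_⟩
  · simp [inner_basis_eq_dualCoord]
  · ext i
    simpa using congr($((dualCoord B).symm.injective (congrArg Subtype.val h)) i)
  · choose m hm using v.2
    refine ⟨m, Subtype.ext <| (dualCoord B).symm_apply_eq.2 <| PiLp.ext fun i => ?_⟩
    have := (inner_basis_eq_dualCoord B v i).symm.trans (hm i)
    simpa using (mul_left_cancel₀ (by positivity) this).symm

theorem integral_mul_exp_inner_sum_smul_basis (f : ℝ^n → ℂ) (l : Fin n → ℤ) :
    ∫ x, f x * Complex.exp (-(Complex.I * ((⟪∑ i, (l i : ℝ) • B i, x⟫ : ℝ) : ℂ))) =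
      (|LinearMap.det (dualCoord B : ℝ^n →ₗ[ℝ] ℝ^n)|⁻¹ : ℝ) *
        𝓕 (f ∘ (dualCoord B).symm) (intPoint l) := by
  rw [Real.fourier_eq, ← Complex.real_smul, ← integral_comp_continuousLinearEquiv]
  refine integral_congr_ae (.of_forall fun x => ?_)
  simp only [Function.comp_apply, ContinuousLinearEquiv.symm_apply_apply, Circle.smul_def,
    Real.fourierChar_apply, inner_sum_smul_basis, smul_eq_mul]
  rw [mul_comm]
  congr 2
  push_cast
  ring

end DualLattice

end

/-- Distributional Poisson summation: for a full-rank lattice `L` in a finite-dimensional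
real inner product space `H` (spanned over `ℤ` by an `ℝ`-basis `B`), the Fourier
transform of the counting measure `δ_L = ∑_{ℓ∈L} δ_ℓ` is, up to a positive constant, the
counting measure on the dual lattice `L* = {v | ⟪v,ℓ⟫ ∈ 2πℤ for all ℓ ∈ L}`.  Pairing
both sides with an arbitrary Schwartz test function `f`, this says
`∑_{ℓ∈L} f̂(ℓ) = c ∑_{m∈L*} f(m)` with `f̂(ξ) = ∫ f(x) e^{−i⟪ξ,x⟫} dx`. -/
theorem stmt13 (n : ℕ) (B : Module.Basis (Fin n) ℝ (EuclideanSpace ℝ (Fin n))) :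
    ∃ c : ℝ, 0 < c ∧
      ∀ f : SchwartzMap (EuclideanSpace ℝ (Fin n)) ℂ,
        ∑' ℓ : Fin n → ℤ,
          (∫ x : EuclideanSpace ℝ (Fin n),
            f x * Complex.exp (-(Complex.I * ((⟪∑ i, (ℓ i : ℝ) • B i, x⟫ : ℝ) : ℂ)))) =
        (c : ℂ) * ∑' v : {v : EuclideanSpace ℝ (Fin n) //
            ∀ i, ∃ m : ℤ, ⟪v, B i⟫ = 2 * Real.pi * m}, f v := by
  have hdet := (LinearEquiv.isUnit_det' (dualCoord B).toLinearEquiv).ne_zero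
  refine ⟨_, inv_pos.2 (abs_pos.2 hdet), fun f => ?_⟩
  let g := SchwartzMap.compCLMOfContinuousLinearEquiv ℂ (dualCoord B).symm f
  simp_rw [integral_mul_exp_inner_sum_smul_basis]
  rw [tsum_mul_left, ← (dualLatticeEquiv B).tsum_eq]
  exact congrArg _ g.tsum_fourier_intPoint
end
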